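/- Let A be an I-modal ririg with I finite, λ(x) = x · ∏_{m∈I} m(x), and X ⊆ A. Then the least I-filter containing X equals the up-set of { λ^l(x₁)·…·λ^l(xₙ) : x₁,…,xₙ ∈ X, l ∈ ℕ }. -/

import Mathlib

/-- An integral residuated rig (ririg). -/
class Ririg (A : Type*) extends CommMonoid A, SemilatticeSup A, OrderBot A, OrderTop A, HImp A where
  one_eq_top : (1 : A) = ⊤
  mul_sup : ∀ x y z : A, x * (y ⊔ z) = x * y ⊔ x * z
  mul_bot : ∀ x : A, x * ⊥ = ⊥
  residuation : ∀ a b c : A, a * b ≤ c ↔ a ≤ b ⇨ c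

/-- A modal operator on a ririg. -/
def IsModal {A : Type*} [Ririg A] (m : A → A) : Prop :=
  m 1 = 1 ∧ ∀ x y : A, m (x ⇨ y) ≤ m x ⇨ m y

/-- Interpretation of an I-block (finite composition of modal operators). -/
def blockApp {A ι : Type*} (f : ι → A → A) : List ι → A → A
  | [] => id
  | i :: L => f i ∘ blockApp f L

/-- I-filter. -/
def IsIFilter {A ι : Type*} [Ririg A] (f : ι → A → A) (F : Set A) : Prop :=
  F.Nonempty ∧ (∀ x y : A, x ∈ F → x ≤ y → y ∈ F) ∧
    (∀ x y : A, x ∈ F → y ∈ F → x * y ∈ F) ∧ (∀ i : ι, ∀ x : A, x ∈ F → f i x ∈ F)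

/-- Congruence of an I-modal ririg. -/
def IsRirigCon {A ι : Type*} [Ririg A] (f : ι → A → A) (θ : A → A → Prop) : Prop :=
  Equivalence θ ∧
    (∀ a b c d : A, θ a b → θ c d → θ (a ⊔ c) (b ⊔ d)) ∧
    (∀ a b c d : A, θ a b → θ c d → θ (a * c) (b * d)) ∧
    (∀ a b c d : A, θ a b → θ c d → θ (a ⇨ c) (b ⇨ d)) ∧
    (∀ i : ι, ∀ a b : A, θ a b → θ (f i a) (f i b))

/-!
`λ(x) = x · ∏ m(x)` lies below `x` and below every `m(x)`, and it maps every I-filter into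
itself; so any I-filter containing `X` contains the products `λ^l(x₁)⋯λ^l(xₙ)` and their up-set.
Conversely that up-set is an I-filter: two products with exponents `l₁, l₂` can both be pushed
down to the exponent `max l₁ l₂` since `λ` is decreasing, and `m(λ^l x₁)⋯m(λ^l xₙ) ≤ m(λ^l x₁⋯λ^l xₙ)`
(a modal operator is monotone and submultiplicative) shows that `m` applied to such a product is
above the product with exponent `l + 1`.
-/

namespace Ririg

variable {A : Type*} [Ririg A]

theorem mul_le_mul_of_le_right {y z : A} (h : y ≤ z) (x : A) : x * y ≤ x * z := by
  rw [← sup_eq_right.mpr h, mul_sup]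
  exact le_sup_left

instance : IsOrderedMonoid A where
  mul_le_mul_left _ _ h c := by simpa only [mul_comm _ c] using mul_le_mul_of_le_right h c

theorem le_one (x : A) : x ≤ 1 :=
  one_eq_top (A := A) ▸ le_top

theorem le_iff_one_le_himp {x y : A} : x ≤ y ↔ 1 ≤ x ⇨ y := by
  rw [← residuation, one_mul]

end Ririg

namespace IsModal

variable {A : Type*} [Ririg A] {m : A → A}

theorem monotone (hm : IsModal m) : Monotone m := fun x y hxy => by
  have himp : x ⇨ y = 1 := le_antisymm (Ririg.le_one _) (Ririg.le_iff_one_le_himp.mp hxy)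
  have h := hm.2 x y
  rw [himp, hm.1] at h
  exact Ririg.le_iff_one_le_himp.mpr h

theorem mul_le_map_mul (hm : IsModal m) (x y : A) : m x * m y ≤ m (x * y) :=
  (Ririg.residuation _ _ _).mpr
    ((hm.monotone ((Ririg.residuation x y _).mp le_rfl)).trans (hm.2 y (x * y)))

theorem prod_map_le_map_prod (hm : IsModal m) (xs : List A) : (xs.map m).prod ≤ m xs.prod := by
  induction xs with
  | nil => simp [hm.1]
  | cons a t ih =>
    simpa using (mul_le_mul_right ih (m a)).trans (hm.mul_le_map_mul a t.prod)

end IsModal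

section IFilter

variable {A ι : Type*} [Ririg A] {f : ι → A → A}

theorem IsIFilter.one_mem {F : Set A} (hF : IsIFilter f F) : (1 : A) ∈ F :=
  let ⟨a, ha⟩ := hF.1
  hF.2.1 a 1 ha (Ririg.le_one a)

theorem IsIFilter.list_prod_mem {F : Set A} (hF : IsIFilter f F) {xs : List A}
    (hxs : ∀ x ∈ xs, x ∈ F) : xs.prod ∈ F :=
  List.prod_induction (· ∈ F) hF.2.2.1 hF.one_mem hxs

end IFilter

section ModalLambda

variable {A ι : Type*} [Ririg A] [Fintype ι] (f : ι → A → A)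

def modalLambda (x : A) : A :=
  x * ∏ i : ι, f i x

theorem modalLambda_le_self (x : A) : modalLambda f x ≤ x :=
  mul_le_of_le_one_right' (Ririg.le_one _)

theorem modalLambda_le_apply (i : ι) (x : A) : modalLambda f x ≤ f i x := by
  classical
  calc modalLambda f x ≤ ∏ j : ι, f j x := mul_le_of_le_one_left' (Ririg.le_one _)
    _ ≤ ∏ j ∈ {i}, f j x :=
      Finset.prod_le_prod_of_subset_of_le_one' (Finset.subset_univ _)
        fun j _ _ => Ririg.le_one _
    _ = f i x := Finset.prod_singleton _ _

theorem antitone_iterate_modalLambda (x : A) : Antitone fun l => (modalLambda f)^[l] x :=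
  antitone_nat_of_succ_le fun l => by
    rw [Function.iterate_succ_apply']
    exact modalLambda_le_self f _

def lambdaFilter (X : Set A) : Set A :=
  {y | ∃ (l : ℕ) (xs : List A), (∀ x ∈ xs, x ∈ X) ∧ (xs.map (modalLambda f)^[l]).prod ≤ y}

variable {f}

theorem IsIFilter.mapsTo_modalLambda {F : Set A} (hF : IsIFilter f F) :
    Set.MapsTo (modalLambda f) F F := fun x hx =>
  hF.2.2.1 _ _ hx
    (Finset.prod_induction _ (· ∈ F) hF.2.2.1 hF.one_mem fun i _ => hF.2.2.2 i x hx)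

theorem subset_lambdaFilter (X : Set A) : X ⊆ lambdaFilter f X := fun x hx =>
  ⟨0, [x], by simpa using hx, by simp⟩

theorem IsIFilter.lambdaFilter_subset {F X : Set A} (hF : IsIFilter f F) (hXF : X ⊆ F) :
    lambdaFilter f X ⊆ F := by
  rintro y ⟨l, xs, hxs, hle⟩
  refine hF.2.1 _ _ (hF.list_prod_mem fun z hz => ?_) hle
  obtain ⟨x, hx, rfl⟩ := List.mem_map.mp hz
  exact hF.mapsTo_modalLambda.iterate l (hXF (hxs x hx))

theorem lambdaFilter_mul_mem {X : Set A} {x y : A} (hx : x ∈ lambdaFilter f X)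
    (hy : y ∈ lambdaFilter f X) : x * y ∈ lambdaFilter f X := by
  obtain ⟨l₁, xs₁, hxs₁, hle₁⟩ := hx
  obtain ⟨l₂, xs₂, hxs₂, hle₂⟩ := hy
  have lower {l : ℕ} (hl : l ≤ max l₁ l₂) (xs : List A) :
      (xs.map (modalLambda f)^[max l₁ l₂]).prod ≤ (xs.map (modalLambda f)^[l]).prod :=
    List.prod_le_prod' fun z _ => antitone_iterate_modalLambda f z hl
  refine ⟨max l₁ l₂, xs₁ ++ xs₂, fun z hz => ?_, ?_⟩
  · rcases List.mem_append.mp hz with hz | hz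
    exacts [hxs₁ z hz, hxs₂ z hz]
  · rw [List.map_append, List.prod_append]
    exact mul_le_mul' ((lower (le_max_left _ _) xs₁).trans hle₁)
      ((lower (le_max_right _ _) xs₂).trans hle₂)

theorem lambdaFilter_map_mem {X : Set A} (hf : ∀ i, IsModal (f i)) (i : ι) {x : A}
    (hx : x ∈ lambdaFilter f X) : f i x ∈ lambdaFilter f X := by
  obtain ⟨l, xs, hxs, hle⟩ := hx
  refine ⟨l + 1, xs, hxs, ?_⟩
  calc (xs.map (modalLambda f)^[l + 1]).prod
      ≤ ((xs.map (modalLambda f)^[l]).map (f i)).prod := by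
        rw [List.map_map]
        refine List.prod_le_prod' fun z _ => ?_
        rw [Function.iterate_succ_apply']
        exact modalLambda_le_apply f i _
    _ ≤ f i (xs.map (modalLambda f)^[l]).prod := (hf i).prod_map_le_map_prod _
    _ ≤ f i x := (hf i).monotone hle

theorem isIFilter_lambdaFilter (hf : ∀ i, IsModal (f i)) (X : Set A) :
    IsIFilter f (lambdaFilter f X) :=
  ⟨⟨1, 0, [], by simp, by simp⟩, fun _ _ ⟨l, xs, hxs, hle⟩ hxy => ⟨l, xs, hxs, hle.trans hxy⟩,
    fun _ _ => lambdaFilter_mul_mem, fun i _ => lambdaFilter_map_mem hf i⟩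

end ModalLambda

theorem stmt11 {A ι : Type*} [Ririg A] [Fintype ι] (f : ι → A → A)
    (hf : ∀ i, IsModal (f i)) (X : Set A) :
    IsLeast {F : Set A | IsIFilter f F ∧ X ⊆ F}
      {y : A | ∃ (l : ℕ) (xs : List A), (∀ x ∈ xs, x ∈ X) ∧
        (xs.map (fun x : A => x * ∏ i : ι, f i x)^[l]).prod ≤ y} :=
  ⟨⟨isIFilter_lambdaFilter hf X, subset_lambdaFilter X⟩,
    fun _ ⟨hF, hXF⟩ => hF.lambdaFilter_subset hXF⟩
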